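/- arXiv:1202.1335 — 3 statements merged into one kernel-verified Lean document; each statement's English description precedes it below -/
import Mathlib

section
/- Let 0 < R ≤ 1, let (ε_n) be a sequence with ε_n ∈ {1,−1} for all n ≥ 1, and let (α_n) be a sequence of complex numbers. Then the partial products ∏_{n=1}^{N} (1+ε_n z^n)^{α_n} converge compactly on the disk |z| < R (as N → ∞) if and only if the series ∑_{n=1}^{∞} α_n·Log(1+ε_n z^n) converges compactly on the disk |z| < R; moreover, in that case this series converges absolutely at every point z with |z| < R. -/
/-!
On the unit disc the partial products are `exp` of the partial sums `S_N` of the logarithmic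
series, so compact convergence of the series gives that of the products. Conversely, by Hurwitz's
theorem the limit of the products is zero-free (it is `1` at `0`), hence bounded away from `0` on
each closed disc `|z| ≤ r < R`. There `exp (S_n - S_m)` is uniformly close to `1`, and
`S_n - S_m`, a continuous logarithm of it vanishing at `0`, is the principal one; so the `S_N` are
uniformly Cauchy. Their terms are then eventually bounded by `1` on `|z| ≤ r`; evaluating at a
point with `ε_n z^n = -r^n` gives `|α_n| r^n ≤ 1`, and comparison with a geometric series gives
absolute convergence for `|z| < r`.
-/

open Filter Topology Finset Metric

namespace Complex

theorem eqOn_log_exp_of_isPreconnected {α : Type*} [TopologicalSpace α] {s : Set α} {w : α → ℂ}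
    (hs : IsPreconnected s) (hw : ContinuousOn w s) (hslit : ∀ z ∈ s, exp (w z) ∈ slitPlane)
    {z₀ : α} (hz₀ : z₀ ∈ s) (him : -Real.pi < (w z₀).im) (him' : (w z₀).im ≤ Real.pi) :
    Set.EqOn (fun z => log (exp (w z))) w s :=
  isCoveringMap_exp.eqOn_of_comp_eqOn hs (hw.cexp.clog hslit) hw
    (fun _ _ => Subtype.ext (exp_log (exp_ne_zero _))) hz₀ (log_exp him him')

theorem norm_le_of_norm_exp_sub_one_le {α : Type*} [TopologicalSpace α] {s : Set α} {w : α → ℂ}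
    (hs : IsPreconnected s) (hw : ContinuousOn w s) {z₀ : α} (hz₀ : z₀ ∈ s) (hw₀ : w z₀ = 0)
    (hsmall : ∀ z ∈ s, ‖exp (w z) - 1‖ ≤ 1 / 2) {z : α} (hz : z ∈ s) :
    ‖w z‖ ≤ 3 / 2 * ‖exp (w z) - 1‖ := by
  have hslit : ∀ z ∈ s, exp (w z) ∈ slitPlane := fun z hz => by
    simpa using mem_slitPlane_of_norm_lt_one ((hsmall z hz).trans_lt one_half_lt_one)
  have hlog : log (exp (w z)) = w z := eqOn_log_exp_of_isPreconnected hs hw hslit hz₀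
    (by simp [hw₀, Real.pi_pos]) (by simp [hw₀, Real.pi_pos.le]) hz
  calc ‖w z‖ = ‖log (1 + (exp (w z) - 1))‖ := by rw [add_sub_cancel, hlog]
    _ ≤ 3 / 2 * ‖exp (w z) - 1‖ := norm_log_one_add_half_le_self (hsmall z hz)

end Complex

theorem norm_div_sub_one_le_of_dist_lt {𝕜 : Type*} [NormedField 𝕜] {a b c : 𝕜} {r δ : ℝ}
    (hc : r ≤ ‖c‖) (hδ : 2 * δ ≤ r) (ha : dist c a < δ) (hb : dist c b < δ) :
    ‖b / a - 1‖ ≤ 4 * δ / r := by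
  have hr : 0 < r := by linarith [dist_nonneg.trans_lt ha]
  have ha' : r / 2 ≤ ‖a‖ := by
    rw [dist_eq_norm] at ha
    linarith [norm_sub_norm_le c a]
  have ha0 : a ≠ 0 := norm_pos_iff.mp (by linarith)
  have hba : ‖b - a‖ ≤ 2 * δ := by
    rw [← dist_eq_norm, dist_comm]
    linarith [dist_triangle a c b, dist_comm a c]
  rw [div_sub_one ha0, norm_div, div_le_div_iff₀ (by linarith) hr]
  nlinarith [norm_nonneg (b - a)]

theorem le_norm_of_forall_mem_sphere_le_norm {g : ℂ → ℂ} {z₀ : ℂ} {ρ c : ℝ} (hρ : 0 < ρ)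
    (hg : DifferentiableOn ℂ g (closedBall z₀ ρ)) (hg₀ : ∀ z ∈ closedBall z₀ ρ, g z ≠ 0)
    (hc : ∀ z ∈ sphere z₀ ρ, c ≤ ‖g z‖) : c ≤ ‖g z₀‖ := by
  rcases le_or_gt c 0 with hc0 | hc0
  · exact hc0.trans (norm_nonneg _)
  have hinv : DiffContOnCl ℂ (fun z => (g z)⁻¹) (ball z₀ ρ) := by
    refine DifferentiableOn.diffContOnCl ?_
    rw [closure_ball z₀ hρ.ne']
    exact hg.inv hg₀
  have := Complex.norm_le_of_forall_mem_frontier_norm_le isBounded_ball hinv (C := c⁻¹)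
    (fun z hz => by
      rw [frontier_ball z₀ hρ.ne'] at hz
      rw [norm_inv]
      exact inv_anti₀ hc0 (hc z hz))
    (subset_closure (mem_ball_self hρ))
  rw [norm_inv] at this
  exact (inv_le_inv₀ (norm_pos_iff.mpr (hg₀ z₀ (mem_closedBall_self hρ.le))) hc0).mp this

theorem AnalyticOnNhd.exists_closedBall_subset_forall_mem_sphere_ne_zero {f : ℂ → ℂ} {U : Set ℂ}
    (hf : AnalyticOnNhd ℂ f U) (hU : IsOpen U) (hUc : IsPreconnected U) {z₁ : ℂ} (hz₁ : z₁ ∈ U)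
    (hf₁ : f z₁ ≠ 0) {z₀ : ℂ} (hz₀ : z₀ ∈ U) :
    ∃ ρ > 0, closedBall z₀ ρ ⊆ U ∧ ∀ z ∈ sphere z₀ ρ, f z ≠ 0 := by
  have hne : ∀ᶠ z in 𝓝[≠] z₀, f z ≠ 0 :=
    (hf z₀ hz₀).eventually_eq_zero_or_eventually_ne_zero.resolve_left
      fun h => hf₁ (hf.eqOn_zero_of_preconnected_of_eventuallyEq_zero hUc hz₀ h hz₁)
  obtain ⟨ρ, hρ, hball⟩ := eventually_nhds_iff_ball.mp
    ((hU.eventually_mem hz₀).and (eventually_nhdsWithin_iff.mp hne))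
  have hsub : closedBall z₀ (ρ / 2) ⊆ ball z₀ ρ := closedBall_subset_ball (half_lt_self hρ)
  refine ⟨ρ / 2, half_pos hρ, fun z hz => (hball z (hsub hz)).1, fun z hz => ?_⟩
  exact (hball z (hsub (sphere_subset_closedBall hz))).2 (ne_of_mem_sphere hz (half_pos hρ).ne')

theorem TendstoLocallyUniformlyOn.ne_zero_of_differentiableOn {ι : Type*} {p : Filter ι} [p.NeBot]
    {U : Set ℂ} {F : ι → ℂ → ℂ} {f : ℂ → ℂ} (hlim : TendstoLocallyUniformlyOn F f p U)
    (hU : IsOpen U) (hUc : IsPreconnected U) (hF : ∀ i, DifferentiableOn ℂ (F i) U)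
    (hF₀ : ∀ i, ∀ z ∈ U, F i z ≠ 0) {z₁ : ℂ} (hz₁ : z₁ ∈ U) (hf₁ : f z₁ ≠ 0) {z : ℂ}
    (hz : z ∈ U) : f z ≠ 0 := by
  intro hfz
  have hfd : DifferentiableOn ℂ f U := hlim.differentiableOn (.of_forall hF) hU
  obtain ⟨ρ, hρ, hsub, hsphere⟩ :=
    (hfd.analyticOnNhd hU).exists_closedBall_subset_forall_mem_sphere_ne_zero hU hUc hz₁ hf₁ hz
  obtain ⟨w, hw, hmin⟩ := (isCompact_sphere z ρ).exists_isMinOn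
    (NormedSpace.sphere_nonempty.mpr hρ.le)
    (hfd.continuousOn.mono (sphere_subset_closedBall.trans hsub)).norm
  have hδ : 0 < ‖f w‖ := norm_pos_iff.mpr (hsphere w hw)
  obtain ⟨i, hi⟩ := (Metric.tendstoUniformlyOn_iff.mp
    ((tendstoLocallyUniformlyOn_iff_forall_isCompact hU).mp hlim _ hsub (isCompact_closedBall z ρ))
    _ (half_pos hδ)).exists
  have hFsphere : ∀ y ∈ sphere z ρ, ‖f w‖ / 2 ≤ ‖F i y‖ := fun y hy => by
    have hy' := hi y (sphere_subset_closedBall hy)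
    rw [dist_eq_norm] at hy'
    linarith [norm_sub_norm_le (f y) (F i y), isMinOn_iff.mp hmin y hy]
  have hcenter := le_norm_of_forall_mem_sphere_le_norm hρ ((hF i).mono hsub)
    (fun y hy => hF₀ i y (hsub hy)) hFsphere
  have hz' := hi z (mem_closedBall_self hρ.le)
  rw [hfz, dist_zero_left] at hz'
  linarith

theorem uniformCauchySeqOn_of_tendstoUniformlyOn_cexp {ι α : Type*} [SemilatticeSup ι]
    [Nonempty ι] [TopologicalSpace α] {K : Set α} {S : ι → α → ℂ} {f : α → ℂ}
    (hK : IsCompact K) (hKc : IsPreconnected K) (hS : ∀ i, ContinuousOn (S i) K) {z₀ : α}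
    (hz₀ : z₀ ∈ K) (hS₀ : ∀ i, S i z₀ = 0)
    (hlim : TendstoUniformlyOn (fun i z => Complex.exp (S i z)) f atTop K)
    (hf : ∀ z ∈ K, f z ≠ 0) : UniformCauchySeqOn S atTop K := by
  obtain ⟨c, hc, hfc⟩ : ∃ c > 0, ∀ z ∈ K, c ≤ ‖f z‖ := by
    obtain ⟨w, hw, hmin⟩ := hK.exists_isMinOn ⟨z₀, hz₀⟩
      (hlim.continuousOn (.of_forall fun i => (hS i).cexp)).norm
    exact ⟨‖f w‖, norm_pos_iff.mpr (hf w hw), isMinOn_iff.mp hmin⟩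
  rw [Metric.uniformCauchySeqOn_iff]
  intro η hη
  set θ := min (1 / 2) (η / 2)
  have hθ : 0 < θ := lt_min one_half_pos (half_pos hη)
  obtain ⟨N, hN⟩ := eventually_atTop.mp
    (Metric.tendstoUniformlyOn_iff.mp hlim (c * θ / 4) (by positivity))
  refine ⟨N, fun m hm n hn z hz => ?_⟩
  have hquot : ∀ y ∈ K, ‖Complex.exp (S n y - S m y) - 1‖ ≤ θ := fun y hy => by
    rw [Complex.exp_sub]
    refine (norm_div_sub_one_le_of_dist_lt (hfc y hy) ?_ (hN m hm y hy)
      (hN n hn y hy)).trans_eq ?_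
    · nlinarith [min_le_left (1 / 2 : ℝ) (η / 2)]
    · field_simp
  have hdiff := Complex.norm_le_of_norm_exp_sub_one_le hKc ((hS n).sub (hS m)) hz₀
    (by simp [hS₀]) (fun y hy => (hquot y hy).trans (min_le_left _ _)) hz
  rw [dist_comm, dist_eq_norm]
  calc ‖S n z - S m z‖ ≤ 3 / 2 * θ := hdiff.trans (by gcongr; exact hquot z hz)
    _ ≤ 3 / 2 * (η / 2) := by gcongr; exact min_le_right _ _
    _ < η := by linarith

theorem exists_tendstoUniformlyOn_of_uniformCauchySeqOn {ι α β : Type*} [UniformSpace β]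
    [CompleteSpace β] [Nonempty β] {p : Filter ι} [p.NeBot] {F : ι → α → β} {𝔖 : Set (Set α)}
    (hF : ∀ K ∈ 𝔖, UniformCauchySeqOn F p K) :
    ∃ f : α → β, ∀ K ∈ 𝔖, TendstoUniformlyOn F f p K :=
  ⟨fun x => limUnder p (F · x), fun K hK => (hF K hK).tendstoUniformlyOn_of_tendsto
    fun _ hx => tendsto_nhds_limUnder (CompleteSpace.complete ((hF K hK).cauchy_map hx))⟩

theorem TendstoUniformlyOn.cexp_of_isCompact {ι α : Type*} [TopologicalSpace α] {p : Filter ι}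
    [p.NeBot] {K : Set α} {S : ι → α → ℂ} {h : α → ℂ} (hlim : TendstoUniformlyOn S h p K)
    (hK : IsCompact K) (hS : ∀ i, ContinuousOn (S i) K) :
    TendstoUniformlyOn (fun i z => Complex.exp (S i z)) (fun z => Complex.exp (h z)) p K :=
  hlim.comp_cexp (hK.image_of_continuousOn (Complex.continuous_re.comp_continuousOn
    (hlim.continuousOn (.of_forall hS)))).bddAbove

theorem norm_mul_pow_lt_one {u z : ℂ} (hu : ‖u‖ ≤ 1) (hz : ‖z‖ < 1) {n : ℕ} (hn : n ≠ 0) :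
    ‖u * z ^ n‖ < 1 := by
  rw [norm_mul, norm_pow]
  exact mul_lt_one_of_nonneg_of_lt_one_right hu (by positivity) (pow_lt_one₀ (norm_nonneg _) hz hn)

theorem exists_norm_eq_mul_pow_eq {u w : ℂ} (hu : ‖u‖ = 1) {n : ℕ} (hn : 0 < n) {r : ℝ}
    (hr : 0 ≤ r) (hw : ‖w‖ = r ^ n) : ∃ x : ℂ, ‖x‖ = r ∧ u * x ^ n = w := by
  have hu₀ : u ≠ 0 := norm_ne_zero_iff.mp (by simp [hu])
  obtain ⟨x, hx⟩ := IsAlgClosed.exists_pow_nat_eq (w / u) hn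
  refine ⟨x, (pow_left_inj₀ (norm_nonneg x) hr hn.ne').mp ?_, by rw [hx, mul_div_cancel₀ _ hu₀]⟩
  rw [← norm_pow, hx, norm_div, hu, div_one, hw]

theorem le_norm_log_one_sub {t : ℝ} (ht : t < 1) : t ≤ ‖Complex.log (1 - t)‖ := by
  have hlog : Real.log (1 - t) ≤ -t := by linarith [Real.log_le_sub_one_of_pos (sub_pos.mpr ht)]
  rw [← Complex.ofReal_one, ← Complex.ofReal_sub, ← Complex.ofReal_log (by linarith),
    Complex.norm_real, Real.norm_eq_abs]
  exact (le_neg.mpr hlog).trans (neg_le_abs _)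

theorem eventually_norm_lt_of_uniformCauchySeqOn_sum {α E : Type*} [SeminormedAddCommGroup E]
    {g : ℕ → α → E} {s : Set α}
    (hg : UniformCauchySeqOn (fun N x => ∑ n ∈ Icc 1 N, g n x) atTop s) {δ : ℝ} (hδ : 0 < δ) :
    ∀ᶠ n in atTop, ∀ x ∈ s, ‖g n x‖ < δ := by
  obtain ⟨N, hN⟩ := Metric.uniformCauchySeqOn_iff.mp hg δ hδ
  filter_upwards [eventually_ge_atTop (N + 1)] with n hn x hx
  obtain ⟨k, rfl⟩ : ∃ k, n = k + 1 := ⟨n - 1, by omega⟩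
  simpa [sum_Icc_succ_top (by omega : 1 ≤ k + 1)] using hN k (by omega) (k + 1) (by omega) x hx

section LogPartialSum

variable {ε α : ℕ → ℂ}

noncomputable def logPartialSum (ε α : ℕ → ℂ) (N : ℕ) (z : ℂ) : ℂ :=
  ∑ n ∈ Icc 1 N, α n * Complex.log (1 + ε n * z ^ n)

theorem logPartialSum_apply_zero (N : ℕ) : logPartialSum ε α N 0 = 0 :=
  sum_eq_zero fun n hn => by simp [zero_pow (by grind : n ≠ 0)]

theorem one_add_mul_pow_mem_slitPlane (hε : ∀ n ≥ 1, ‖ε n‖ = 1) {n : ℕ} (hn : 1 ≤ n) {z : ℂ}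
    (hz : ‖z‖ < 1) :
    1 + ε n * z ^ n ∈ Complex.slitPlane :=
  Complex.mem_slitPlane_of_norm_lt_one (norm_mul_pow_lt_one (hε n hn).le hz (by omega))

theorem differentiableOn_logPartialSum (hε : ∀ n ≥ 1, ‖ε n‖ = 1) (N : ℕ) :
    DifferentiableOn ℂ (logPartialSum ε α N) (ball 0 1) := by
  intro z hz
  refine (DifferentiableAt.fun_sum fun n hn => ?_).differentiableWithinAt
  have hslit := one_add_mul_pow_mem_slitPlane hε (mem_Icc.mp hn).1 (mem_ball_zero_iff.mp hz)
  fun_prop (disch := exact hslit)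

theorem prod_cpow_eq_exp_logPartialSum (hε : ∀ n ≥ 1, ‖ε n‖ = 1) (N : ℕ) {z : ℂ} (hz : ‖z‖ < 1) :
    ∏ n ∈ Icc 1 N, (1 + ε n * z ^ n) ^ α n = Complex.exp (logPartialSum ε α N z) := by
  rw [logPartialSum, Complex.exp_sum]
  refine prod_congr rfl fun n hn => ?_
  rw [Complex.cpow_def_of_ne_zero (Complex.slitPlane_ne_zero
    (one_add_mul_pow_mem_slitPlane hε (mem_Icc.mp hn).1 hz)), mul_comm]

theorem uniformCauchySeqOn_logPartialSum (hε : ∀ n ≥ 1, ‖ε n‖ = 1) {R : ℝ} (hR : R ≤ 1) {f : ℂ → ℂ}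
    (hlim : TendstoLocallyUniformlyOn (fun N z => Complex.exp (logPartialSum ε α N z)) f atTop
      (ball 0 R)) {r : ℝ} (hr₀ : 0 ≤ r) (hr : r < R) :
    UniformCauchySeqOn (logPartialSum ε α) atTop (closedBall 0 r) := by
  have h₀ : (0 : ℂ) ∈ ball 0 R := mem_ball_self (hr₀.trans_lt hr)
  have hsub : closedBall (0 : ℂ) r ⊆ ball 0 R := closedBall_subset_ball hr
  have hdiff (N : ℕ) : DifferentiableOn ℂ (logPartialSum ε α N) (ball 0 R) :=
    (differentiableOn_logPartialSum hε N).mono (ball_subset_ball hR)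
  have hf₀ : f 0 = 1 :=
    tendsto_nhds_unique (hlim.tendsto_at h₀) (by simp [logPartialSum_apply_zero])
  refine uniformCauchySeqOn_of_tendstoUniformlyOn_cexp (isCompact_closedBall 0 r)
    (convex_closedBall 0 r).isPreconnected (fun N => ((hdiff N).continuousOn.mono hsub))
    (mem_closedBall_self hr₀) logPartialSum_apply_zero
    ((tendstoLocallyUniformlyOn_iff_forall_isCompact isOpen_ball).mp hlim _ hsub
      (isCompact_closedBall 0 r)) fun z hz => ?_
  -- Hurwitz: the limit is zero-free, being `1` at the centre.
  exact hlim.ne_zero_of_differentiableOn isOpen_ball (convex_ball 0 R).isPreconnected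
    (fun N => (hdiff N).cexp) (fun _ _ _ => Complex.exp_ne_zero _) h₀ (by simp [hf₀]) (hsub hz)

theorem eventually_norm_mul_pow_le_one (hε : ∀ n ≥ 1, ‖ε n‖ = 1) {r : ℝ} (hr₀ : 0 ≤ r) (hr₁ : r < 1)
    (h : UniformCauchySeqOn (logPartialSum ε α) atTop (closedBall 0 r)) :
    ∀ᶠ n in atTop, ‖α n‖ * r ^ n ≤ 1 := by
  filter_upwards [eventually_norm_lt_of_uniformCauchySeqOn_sum h one_pos, eventually_ge_atTop 1]
    with n hn hn₁
  -- at a point with `ε n * x ^ n = -r ^ n` the `n`-th term has norm at least `‖α n‖ * r ^ n`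
  obtain ⟨x, hx, hxn⟩ := exists_norm_eq_mul_pow_eq (hε n hn₁) hn₁ hr₀ (w := -(r ^ n : ℝ))
    (by simp [abs_of_nonneg hr₀])
  have hterm := hn x (mem_closedBall_zero_iff.mpr hx.le)
  rw [hxn, norm_mul, ← sub_eq_add_neg] at hterm
  calc ‖α n‖ * r ^ n ≤ ‖α n‖ * ‖Complex.log (1 - (r ^ n : ℝ))‖ :=
        mul_le_mul_of_nonneg_left (le_norm_log_one_sub (pow_lt_one₀ hr₀ hr₁ (by omega)))
          (norm_nonneg _)
    _ ≤ 1 := hterm.le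

theorem summable_norm_of_uniformCauchySeqOn_logPartialSum (hε : ∀ n ≥ 1, ‖ε n‖ = 1) {r : ℝ}
    (hr₁ : r < 1) (h : UniformCauchySeqOn (logPartialSum ε α) atTop (closedBall 0 r)) {z : ℂ}
    (hz : ‖z‖ < r) :
    Summable fun n => ‖α n * Complex.log (1 + ε n * z ^ n)‖ := by
  have hr : 0 < r := (norm_nonneg z).trans_lt hz
  set q := ‖z‖ / r
  have hq₁ : q < 1 := (div_lt_one hr).mpr hz
  refine .of_norm_bounded_eventually_nat
    ((summable_geometric_of_lt_one (by positivity) hq₁).mul_left (3 / 2)) ?_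
  have hsmall : ∀ᶠ n in atTop, ‖z‖ ^ n ≤ 1 / 2 :=
    (tendsto_pow_atTop_nhds_zero_of_lt_one (norm_nonneg z) (hz.trans hr₁)).eventually
      (ge_mem_nhds one_half_pos)
  filter_upwards [eventually_norm_mul_pow_le_one hε hr.le hr₁ h, hsmall, eventually_ge_atTop 1]
    with n hα hzn hn
  have hnorm : ‖ε n * z ^ n‖ = ‖z‖ ^ n := by rw [norm_mul, hε n hn, one_mul, norm_pow]
  have hlog := Complex.norm_log_one_add_half_le_self (hnorm.trans_le hzn)
  rw [norm_norm, norm_mul]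
  calc ‖α n‖ * ‖Complex.log (1 + ε n * z ^ n)‖ ≤ ‖α n‖ * (3 / 2 * ‖z‖ ^ n) := by
        rw [← hnorm]; gcongr
    _ = 3 / 2 * (‖α n‖ * r ^ n) * q ^ n := by
        rw [div_pow]; field_simp
    _ ≤ 3 / 2 * q ^ n := by
        have : 0 ≤ q ^ n := by positivity
        nlinarith

theorem forall_isCompact_tendstoUniformlyOn_prod_cpow_iff
    (hε : ∀ n ≥ 1, ‖ε n‖ = 1) {R : ℝ} (hR : R ≤ 1) {f : ℂ → ℂ} :
    (∀ K ⊆ ball (0 : ℂ) R, IsCompact K → TendstoUniformlyOn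
        (fun N z => ∏ n ∈ Icc 1 N, (1 + ε n * z ^ n) ^ (α n)) f atTop K) ↔
      TendstoLocallyUniformlyOn (fun N z => Complex.exp (logPartialSum ε α N z)) f atTop
        (ball 0 R) := by
  have heq (N : ℕ) : Set.EqOn (fun z => ∏ n ∈ Icc 1 N, (1 + ε n * z ^ n) ^ (α n))
      (fun z => Complex.exp (logPartialSum ε α N z)) (ball 0 R) := fun z hz =>
    prod_cpow_eq_exp_logPartialSum hε N ((mem_ball_zero_iff.mp hz).trans_le hR)
  rw [← tendstoLocallyUniformlyOn_iff_forall_isCompact isOpen_ball]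
  exact ⟨fun h => h.congr heq, fun h => h.congr fun N => (heq N).symm⟩

end LogPartialSum

theorem stmt_2 (R : ℝ) (hR0 : 0 < R) (hR1 : R ≤ 1)
    (ε : ℕ → ℂ) (hε : ∀ n ≥ 1, ε n = 1 ∨ ε n = -1) (α : ℕ → ℂ) :
    ((∃ f : ℂ → ℂ, ∀ K ⊆ Metric.ball (0 : ℂ) R, IsCompact K →
        TendstoUniformlyOn
          (fun N z => ∏ n ∈ Finset.Icc 1 N, (1 + ε n * z ^ n) ^ (α n)) f atTop K) ↔
      (∃ h : ℂ → ℂ, ∀ K ⊆ Metric.ball (0 : ℂ) R, IsCompact K →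
        TendstoUniformlyOn
          (fun N z => ∑ n ∈ Finset.Icc 1 N, α n * Complex.log (1 + ε n * z ^ n)) h atTop K))
    ∧
    ((∃ f : ℂ → ℂ, ∀ K ⊆ Metric.ball (0 : ℂ) R, IsCompact K →
        TendstoUniformlyOn
          (fun N z => ∏ n ∈ Finset.Icc 1 N, (1 + ε n * z ^ n) ^ (α n)) f atTop K) →
      ∀ z ∈ Metric.ball (0 : ℂ) R,
        Summable (fun n => ‖α n * Complex.log (1 + ε n * z ^ n)‖)) := by
  have hε' : ∀ n ≥ 1, ‖ε n‖ = 1 := fun n hn => by rcases hε n hn with h | h <;> simp [h]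
  simp only [forall_isCompact_tendstoUniformlyOn_prod_cpow_iff hε' hR1]
  have hcauchy {f : ℂ → ℂ} (hf : TendstoLocallyUniformlyOn
      (fun N z => Complex.exp (logPartialSum ε α N z)) f atTop (ball 0 R)) {r : ℝ} (hr₀ : 0 ≤ r)
      (hr : r < R) := uniformCauchySeqOn_logPartialSum hε' hR1 hf hr₀ hr
  refine ⟨⟨fun ⟨f, hf⟩ => ?_, fun ⟨h, hh⟩ => ?_⟩, fun ⟨f, hf⟩ z hz => ?_⟩
  · obtain ⟨h, hh⟩ := exists_tendstoUniformlyOn_of_uniformCauchySeqOn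
      (F := logPartialSum ε α) (𝔖 := {K | K ⊆ ball 0 R ∧ IsCompact K}) fun K ⟨hK, hKc⟩ => by
        obtain ⟨r, hr, hKr⟩ := exists_pos_lt_subset_ball hR0 hKc.isClosed hK
        exact (hcauchy hf hr.1.le hr.2).mono (hKr.trans ball_subset_closedBall)
    exact ⟨h, fun K hK hKc => hh K ⟨hK, hKc⟩⟩
  · refine ⟨_, (tendstoLocallyUniformlyOn_iff_forall_isCompact isOpen_ball).mpr
      fun K hK hKc => (hh K hK hKc).cexp_of_isCompact hKc fun N => ?_⟩
    exact (differentiableOn_logPartialSum hε' N).continuousOn.mono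
      (hK.trans (ball_subset_ball hR1))
  · have hzR := mem_ball_zero_iff.mp hz
    exact summable_norm_of_uniformCauchySeqOn_logPartialSum hε' (r := (‖z‖ + R) / 2)
      (by linarith) (hcauchy hf (by positivity) (by linarith)) (by linarith)
end

section
/- For every z ∈ ℂ with |z| < 1, the partial products ∏_{n=1}^{N} (1−z^n)^{φ(n)/n} converge as N → ∞ to e^{z/(z−1)}, where φ is the Euler totient function; that is, e^{z/(z−1)} = ∏_{n=1}^{∞} (1−z^n)^{φ(n)/n}. -/
/-!
Taking logarithms, it suffices that `∑ₙ (φ(n)/n) log (1 - zⁿ) = z/(z - 1)`. Expanding each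
logarithm gives the absolutely convergent double series `-∑_{n,k} (φ(n)/n) z^{nk}/k`; grouping its
terms by `m = nk` and using `∑_{d ∣ m} φ(d) = m` collapses it to `-∑_{m ≥ 1} zᵐ = z/(z - 1)`.
-/

open Filter Topology Finset

lemma norm_pow_lt_one {K : Type*} [NormedDivisionRing K] {z : K} (hz : ‖z‖ < 1) {n : ℕ}
    (hn : n ≠ 0) : ‖z ^ n‖ < 1 := by
  rw [norm_pow]
  exact pow_lt_one₀ (norm_nonneg z) hz hn

lemma HasSum.tendsto_sum_Icc_one {M : Type*} [AddCommMonoid M] [TopologicalSpace M] {f : ℕ → M}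
    {a : M} (hf : HasSum f a) (h0 : f 0 = 0) :
    Tendsto (fun N => ∑ n ∈ Icc 1 N, f n) atTop (𝓝 a) := by
  refine (hf.tendsto_sum_nat.comp (tendsto_add_atTop_nat 1)).congr fun N => ?_
  rw [Function.comp_apply, Nat.range_succ_eq_Icc_zero, ← sum_Ioc_add_eq_sum_Icc N.zero_le, h0,
    add_zero]
  rfl

/-- Vanishes when `p.1 = 0` or `p.2 = 0`, since `x / 0 = 0`. -/
noncomputable def totientLogTerm (z : ℂ) (p : ℕ × ℕ) : ℂ :=
  -((p.1.totient : ℂ) / p.1 * (z ^ (p.1 * p.2) / p.2))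

lemma norm_totientLogTerm_le {z : ℂ} (hz : ‖z‖ ≤ 1) (p : ℕ × ℕ) :
    ‖totientLogTerm z p‖ ≤ √‖z‖ ^ p.1 * √‖z‖ ^ p.2 := by
  obtain ⟨a, b⟩ := p
  rcases Nat.eq_zero_or_pos a with rfl | ha
  · simp [totientLogTerm]
  rcases Nat.eq_zero_or_pos b with rfl | hb
  · simp [totientLogTerm]
  have htot : (a.totient : ℝ) / a ≤ 1 :=
    div_le_one_of_le₀ (mod_cast Nat.totient_le a) (Nat.cast_nonneg a)
  calc ‖totientLogTerm z (a, b)‖ = (a.totient : ℝ) / a * (‖z‖ ^ (a * b) / b) := by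
        simp [totientLogTerm]
    _ ≤ 1 * (‖z‖ ^ (a * b) / 1) := by
        gcongr
        exact_mod_cast hb
    _ = √‖z‖ ^ (2 * (a * b)) := by
        rw [one_mul, div_one, pow_mul (√‖z‖), Real.sq_sqrt (norm_nonneg z)]
    _ ≤ √‖z‖ ^ (a + b) :=
        pow_le_pow_of_le_one (Real.sqrt_nonneg _) (Real.sqrt_le_one.mpr hz) (by nlinarith)
    _ = √‖z‖ ^ a * √‖z‖ ^ b := pow_add _ _ _

lemma summable_totientLogTerm {z : ℂ} (hz : ‖z‖ < 1) : Summable (totientLogTerm z) := by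
  have hgeom : Summable (fun n : ℕ => √‖z‖ ^ n) :=
    summable_geometric_of_lt_one (Real.sqrt_nonneg _) ((Real.sqrt_lt' one_pos).mpr (by simpa))
  exact .of_norm_bounded (hgeom.mul_of_nonneg hgeom (fun _ => by positivity) fun _ => by positivity)
    (norm_totientLogTerm_le hz.le)

lemma hasSum_totientLogTerm_fst {z : ℂ} (hz : ‖z‖ < 1) (n : ℕ) :
    HasSum (fun k => totientLogTerm z (n, k)) (n.totient / n * Complex.log (1 - z ^ n)) := by
  rcases eq_or_ne n 0 with rfl | hn
  · simp [totientLogTerm, hasSum_zero]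
  have h := (Complex.hasSum_taylorSeries_neg_log (norm_pow_lt_one hz hn)).mul_left
    (-(n.totient / n : ℂ))
  rw [neg_mul_neg] at h
  refine h.congr_fun fun k => ?_
  rw [totientLogTerm, ← pow_mul]
  ring

lemma sum_divisorsAntidiagonal_totientLogTerm (z : ℂ) {m : ℕ} (hm : m ≠ 0) :
    ∑ p ∈ m.divisorsAntidiagonal, totientLogTerm z p = -z ^ m := by
  have hterm : ∀ p ∈ m.divisorsAntidiagonal,
      totientLogTerm z p = -(p.1.totient * (z ^ m / m)) := by
    rintro ⟨a, b⟩ hp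
    obtain ⟨rfl, -⟩ := Nat.mem_divisorsAntidiagonal.mp hp
    have ha : (a : ℂ) ≠ 0 := by rintro h; simp_all
    have hb : (b : ℂ) ≠ 0 := by rintro h; simp_all
    simp only [totientLogTerm]
    push_cast
    field_simp
  rw [sum_congr rfl hterm, sum_neg_distrib, ← sum_mul,
    Nat.sum_divisorsAntidiagonal fun a _ => (a.totient : ℂ), ← Nat.cast_sum, Nat.sum_totient]
  field_simp [show (m : ℂ) ≠ 0 from mod_cast hm]

lemma tsum_totientLogTerm_preimage_mul (z : ℂ) (m : ℕ) :
    ∑' p : (fun p : ℕ × ℕ => p.1 * p.2) ⁻¹' {m}, totientLogTerm z p =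
      if m = 0 then 0 else -z ^ m := by
  split_ifs with hm
  · refine (tsum_congr fun p => ?_).trans tsum_zero
    obtain ⟨⟨a, b⟩, hp⟩ := p
    rcases Nat.mul_eq_zero.mp (hp.trans hm) with rfl | rfl <;> simp [totientLogTerm]
  · have hfiber : (fun p : ℕ × ℕ => p.1 * p.2) ⁻¹' {m} = m.divisorsAntidiagonal := by
      ext p
      simp [hm, eq_comm]
    rw [hfiber, tsum_subtype', sum_divisorsAntidiagonal_totientLogTerm z hm]

lemma hasSum_ite_zero_neg_pow {z : ℂ} (hz : ‖z‖ < 1) :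
    HasSum (fun m : ℕ => if m = 0 then 0 else -z ^ m) (z / (z - 1)) := by
  rw [← hasSum_nat_add_iff' 1]
  simp only [Nat.add_one_ne_zero, if_false, sum_range_one, if_true, sub_zero]
  rw [div_eq_mul_inv, ← neg_sub 1 z, inv_neg, mul_neg, ← neg_mul]
  exact ((hasSum_geometric_of_norm_lt_one hz).mul_left (-z)).congr_fun fun m => by ring

theorem hasSum_totient_div_mul_log_one_sub_pow {z : ℂ} (hz : ‖z‖ < 1) :
    HasSum (fun n : ℕ => n.totient / n * Complex.log (1 - z ^ n)) (z / (z - 1)) := by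
  have hF := (summable_totientLogTerm hz).hasSum
  have hT : ∑' p, totientLogTerm z p = z / (z - 1) := by
    have h := hF.tsum_fiberwise fun p => p.1 * p.2
    simp only [tsum_totientLogTerm_preimage_mul] at h
    exact h.unique (hasSum_ite_zero_neg_pow hz)
  exact hT ▸ hF.prod_fiberwise (hasSum_totientLogTerm_fst hz)

theorem stmt_15 (z : ℂ) (hz : ‖z‖ < 1) :
    Tendsto (fun N => ∏ n ∈ Finset.Icc 1 N, (1 - z ^ n) ^ ((Nat.totient n : ℂ) / n)) atTop
      (𝓝 (Complex.exp (z / (z - 1)))) := by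
  have hsum := (hasSum_totient_div_mul_log_one_sub_pow hz).tendsto_sum_Icc_one (by simp)
  refine ((Complex.continuous_exp.tendsto _).comp hsum).congr fun N => ?_
  rw [Function.comp_apply, Complex.exp_sum]
  refine prod_congr rfl fun n hn => ?_
  have hbase : 1 - z ^ n ≠ 0 := sub_ne_zero.mpr fun h => by
    simpa [← h] using norm_pow_lt_one hz (Nat.one_le_iff_ne_zero.mp (mem_Icc.mp hn).1)
  rw [Complex.cpow_def_of_ne_zero hbase, mul_comm]
end

section
/- Let 0 < R ≤ 1, let f be analytic and without zeros on an open set containing the closed disk |z| ≤ R, and let (α_n)_{n≥2} be complex numbers such that the partial products ∏_{n=2}^{N} (1−z^n)^{α_n} converge compactly to f on the open disk |z| < R as N → ∞. Let B > 0 be such that |f'(z)/f(z)| ≤ B for all z with |z| = R. Then |α_n| ≤ B/R^n for every n ≥ 2. -/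
/-!
Write `P_N` for the partial products. Then `logDeriv P_N = -∑_{n=2}^N n α_n z^(n-1) / (1 - z^n)`,
and expanding `1 / (1 - z^n)` geometrically shows that its coefficient of `z^(d-1)`, i.e.
`(2πi)⁻¹ ∮ logDeriv P_N z / z^d dz` over `|z| = r < 1`, is `-S_d := -∑_{n ∣ d, n ≥ 2} n α_n` once
`N ≥ d`. As `P_N → f` locally uniformly on the disc, `logDeriv P_N → f'/f` locally uniformly, so
the same holds for `f'/f`. Since `f'/f` is holomorphic on the closed disc, the contour can be moved
to `|z| = R`, where `|f'/f| ≤ B` gives `|S_d| ≤ B R / R^d`. Möbius inversion of `S` bounds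
`n |α_n|` by `#divisors(n) · B R / R^n ≤ n B / R^n`.
-/

open Filter Topology Finset
open Metric Complex Real

lemma one_sub_pow_mem_slitPlane {z : ℂ} (hz : ‖z‖ < 1) {n : ℕ} (hn : n ≠ 0) :
    1 - z ^ n ∈ slitPlane := by
  have hzn : ‖z ^ n‖ < 1 := by rw [norm_pow]; exact pow_lt_one₀ (norm_nonneg z) hz hn
  refine mem_slitPlane_iff.mpr (Or.inl ?_)
  linarith [sub_re 1 (z ^ n), one_re, re_le_norm (z ^ n)]

lemma one_sub_pow_ne_zero {z : ℂ} (hz : ‖z‖ < 1) {n : ℕ} (hn : n ≠ 0) : 1 - z ^ n ≠ 0 :=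
  slitPlane_ne_zero (one_sub_pow_mem_slitPlane hz hn)

lemma one_sub_pow_cpow_ne_zero (a : ℂ) {z : ℂ} (hz : ‖z‖ < 1) {n : ℕ} (hn : n ≠ 0) :
    (1 - z ^ n) ^ a ≠ 0 :=
  cpow_ne_zero_iff.mpr (.inl (one_sub_pow_ne_zero hz hn))

lemma hasDerivAt_one_sub_pow_cpow (a : ℂ) {z : ℂ} (hz : ‖z‖ < 1) {n : ℕ} (hn : n ≠ 0) :
    HasDerivAt (fun w => (1 - w ^ n) ^ a) (a * (1 - z ^ n) ^ (a - 1) * -(n * z ^ (n - 1))) z :=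
  ((hasDerivAt_pow n z).const_sub 1).cpow_const (one_sub_pow_mem_slitPlane hz hn)

lemma logDeriv_one_sub_pow_cpow (a : ℂ) {z : ℂ} (hz : ‖z‖ < 1) {n : ℕ} (hn : n ≠ 0) :
    logDeriv (fun w => (1 - w ^ n) ^ a) z = -(n * a) * (z ^ (n - 1) / (1 - z ^ n)) := by
  have hne := one_sub_pow_ne_zero hz hn
  have := one_sub_pow_cpow_ne_zero a hz hn
  rw [logDeriv_apply, (hasDerivAt_one_sub_pow_cpow a hz hn).deriv, cpow_sub _ _ hne, cpow_one]
  field_simp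

section PartialProduct

variable (α : ℕ → ℂ) {s : Finset ℕ} (hs : 0 ∉ s) {z : ℂ}
include hs

lemma differentiableOn_prod_one_sub_pow_cpow :
    DifferentiableOn ℂ (fun w => ∏ n ∈ s, (1 - w ^ n) ^ α n) (ball (0 : ℂ) 1) := fun _ hw =>
  (DifferentiableAt.fun_finsetProd fun n hn =>
    (hasDerivAt_one_sub_pow_cpow (α n) (mem_ball_zero_iff.mp hw)
      (ne_of_mem_of_not_mem hn hs)).differentiableAt).differentiableWithinAt

lemma logDeriv_prod_one_sub_pow_cpow (hz : ‖z‖ < 1) :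
    logDeriv (fun w => ∏ n ∈ s, (1 - w ^ n) ^ α n) z =
      ∑ n ∈ s, -(n * α n) * (z ^ (n - 1) / (1 - z ^ n)) := by
  rw [logDeriv_prod (f := fun n w => (1 - w ^ n) ^ α n)
    (fun n hn => one_sub_pow_cpow_ne_zero (α n) hz (ne_of_mem_of_not_mem hn hs))
    fun n hn =>
      (hasDerivAt_one_sub_pow_cpow (α n) hz (ne_of_mem_of_not_mem hn hs)).differentiableAt]
  exact sum_congr rfl fun n hn => logDeriv_one_sub_pow_cpow (α n) hz (ne_of_mem_of_not_mem hn hs)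

end PartialProduct

lemma circleIntegral_pow_div_pow {r : ℝ} (hr : 0 < r) (m d : ℕ) :
    ∮ z in C(0, r), z ^ m / z ^ d = if m + 1 = d then 2 * π * I else 0 := by
  have hzpow : Set.EqOn (fun z : ℂ => z ^ m / z ^ d) (fun z => (z - 0) ^ ((m : ℤ) - d))
      (sphere (0 : ℂ) r) := fun z hz => by
    simp [zpow_sub₀ (ne_zero_of_mem_sphere hr.ne' ⟨z, hz⟩)]
  rw [circleIntegral.integral_congr hr.le hzpow]
  split_ifs with h
  · have hexp : (m : ℤ) - d = -1 := by omega
    simpa [hexp] using circleIntegral.integral_sub_center_inv 0 hr.ne'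
  · exact circleIntegral.integral_sub_zpow_of_ne (by omega) 0 0 r

lemma pow_div_one_sub_pow_div_pow {z : ℂ} (hz : z ≠ 0) {m : ℕ} (hzm : 1 - z ^ (m + 1) ≠ 0)
    (d : ℕ) : z ^ m / (1 - z ^ (m + 1)) / z ^ d =
      ∑ k ∈ range d, z ^ (m + (m + 1) * k) / z ^ d + z ^ (m * (d + 1)) / (1 - z ^ (m + 1)) := by
  have hgeom : ∑ k ∈ range d, z ^ (m + (m + 1) * k) =
      z ^ m * ∑ k ∈ range d, (z ^ (m + 1)) ^ k := by
    simp only [mul_sum, pow_add, pow_mul]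
  rw [← sum_div, hgeom]
  field_simp
  linear_combination -z ^ m * mul_neg_geom_sum (z ^ (m + 1)) d

lemma sum_range_ite_mul_succ_eq {M : Type*} [AddCommMonoid M] {n d : ℕ} (hd : d ≠ 0) (c : M) :
    ∑ k ∈ range d, (if n * (k + 1) = d then c else 0) = if n ∣ d then c else 0 := by
  split_ifs with hdvd
  · obtain ⟨q, rfl⟩ := hdvd
    have hn : 0 < n := Nat.pos_of_ne_zero (left_ne_zero_of_mul hd)
    have hq : 0 < q := Nat.pos_of_ne_zero (right_ne_zero_of_mul hd)
    calc ∑ k ∈ range (n * q), (if n * (k + 1) = n * q then c else 0)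
        = ∑ k ∈ range (n * q), if q - 1 = k then c else 0 :=
          sum_congr rfl fun k _ => if_congr (by rw [Nat.mul_left_cancel_iff hn]; omega) rfl rfl
      _ = c := by
          rw [sum_ite_eq, if_pos (mem_range.mpr ((Nat.sub_lt hq one_pos).trans_le
            (Nat.le_mul_of_pos_left q hn)))]
  · exact sum_eq_zero fun k _ => if_neg fun h => hdvd ⟨k + 1, h.symm⟩

lemma circleIntegral_pow_div_one_sub_pow_div_pow {r : ℝ} (hr0 : 0 < r) (hr1 : r < 1) {n d : ℕ}
    (hn : n ≠ 0) (hd : d ≠ 0) :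
    ∮ z in C(0, r), z ^ (n - 1) / (1 - z ^ n) / z ^ d = if n ∣ d then 2 * π * I else 0 := by
  obtain ⟨m, rfl⟩ := Nat.exists_eq_add_one_of_ne_zero hn
  rw [Nat.add_sub_cancel]
  have hnorm : ∀ z ∈ closedBall (0 : ℂ) r, ‖z‖ < 1 := fun z hz =>
    (mem_closedBall_zero_iff.mp hz).trans_lt hr1
  have hne : ∀ z ∈ sphere (0 : ℂ) r, z ≠ 0 := fun z hz => ne_zero_of_mem_sphere hr0.ne' ⟨z, hz⟩
  -- The remainder of the truncated geometric series is holomorphic on the disc, so only the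
  -- monomials contribute to the integral.
  have hrem : DifferentiableOn ℂ (fun z => z ^ (m * (d + 1)) / (1 - z ^ (m + 1)))
      (closedBall (0 : ℂ) r) :=
    (differentiableOn_pow _).div ((differentiableOn_const 1).sub (differentiableOn_pow _))
      fun z hz => one_sub_pow_ne_zero (hnorm z hz) m.succ_ne_zero
  have hterm : ∀ k ∈ range d,
      CircleIntegrable (fun z : ℂ => z ^ (m + (m + 1) * k) / z ^ d) 0 r := fun k _ =>
    ContinuousOn.circleIntegrable hr0.le <| (continuous_pow _).continuousOn.div
      (continuous_pow _).continuousOn fun z hz => pow_ne_zero _ (hne z hz)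
  rw [circleIntegral.integral_congr hr0.le fun z hz => pow_div_one_sub_pow_div_pow (hne z hz)
      (one_sub_pow_ne_zero (hnorm z (sphere_subset_closedBall hz)) m.succ_ne_zero) d,
    circleIntegral.integral_add (.fun_sum _ hterm)
      ((hrem.mono sphere_subset_closedBall).continuousOn.circleIntegrable hr0.le),
    circleIntegral.integral_fun_sum hterm,
    (hrem.diffContOnCl_ball subset_rfl).circleIntegral_eq_zero hr0.le, add_zero]
  simp_rw [circleIntegral_pow_div_pow hr0,
    show ∀ k, m + (m + 1) * k + 1 = (m + 1) * (k + 1) from fun k => by ring]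
  exact sum_range_ite_mul_succ_eq hd _

lemma circleIntegral_logDeriv_prod_one_sub_pow_cpow_div_pow (α : ℕ → ℂ) {s : Finset ℕ}
    (hs : 0 ∉ s) {r : ℝ} (hr0 : 0 < r) (hr1 : r < 1) {d : ℕ} (hd : d ≠ 0) :
    ∮ z in C(0, r), logDeriv (fun w => ∏ n ∈ s, (1 - w ^ n) ^ α n) z / z ^ d =
      -(2 * π * I) * ∑ n ∈ s with n ∣ d, n * α n := by
  have hnorm : ∀ z ∈ sphere (0 : ℂ) r, ‖z‖ < 1 := fun z hz => by
    rwa [mem_sphere_zero_iff_norm.mp hz]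
  have hne : ∀ z ∈ sphere (0 : ℂ) r, z ≠ 0 := fun z hz => ne_zero_of_mem_sphere hr0.ne' ⟨z, hz⟩
  have hterm : ∀ n ∈ s, CircleIntegrable
      (fun z => -(n * α n) * (z ^ (n - 1) / (1 - z ^ n) / z ^ d)) 0 r := fun n hn =>
    ContinuousOn.circleIntegrable hr0.le <| continuousOn_const.mul <|
      ((continuous_pow _).continuousOn.div (continuousOn_const.sub (continuous_pow _).continuousOn)
        fun z hz => one_sub_pow_ne_zero (hnorm z hz) (ne_of_mem_of_not_mem hn hs)).div
      (continuous_pow _).continuousOn fun z hz => pow_ne_zero _ (hne z hz)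
  rw [circleIntegral.integral_congr
      (g := fun z => ∑ n ∈ s, -(n * α n) * (z ^ (n - 1) / (1 - z ^ n) / z ^ d)) hr0.le
      fun z hz => by
        simp only [logDeriv_prod_one_sub_pow_cpow α hs (hnorm z hz), sum_div, mul_div_assoc],
    circleIntegral.integral_fun_sum hterm, sum_filter, mul_sum]
  refine sum_congr rfl fun n hn => ?_
  rw [circleIntegral.integral_const_mul,
    circleIntegral_pow_div_one_sub_pow_div_pow hr0 hr1 (ne_of_mem_of_not_mem hn hs) hd]
  split_ifs <;> ring

theorem TendstoLocallyUniformlyOn.logDeriv {ι : Type*} {l : Filter ι} [l.NeBot]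
    {F : ι → ℂ → ℂ} {f : ℂ → ℂ} {U : Set ℂ} (hF : TendstoLocallyUniformlyOn F f l U)
    (hFd : ∀ᶠ i in l, DifferentiableOn ℂ (F i) U) (hU : IsOpen U) (hf : ∀ z ∈ U, f z ≠ 0) :
    TendstoLocallyUniformlyOn (fun i => logDeriv (F i)) (logDeriv f) l U := by
  have hfd := hF.differentiableOn hFd hU
  exact (hF.deriv hFd hU).fun_div₀ hF (hfd.deriv hU).continuousOn hfd.continuousOn hf

theorem TendstoLocallyUniformlyOn.tendsto_circleIntegral {ι E : Type*} [NormedAddCommGroup E]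
    [NormedSpace ℂ E] {l : Filter ι} [l.IsCountablyGenerated] {F : ι → ℂ → E} {f : ℂ → E}
    {U : Set ℂ} {c : ℂ} {r : ℝ} (hF : TendstoLocallyUniformlyOn F f l U)
    (hFc : ∀ᶠ i in l, ContinuousOn (F i) U) (hr : 0 ≤ r) (hU : sphere c r ⊆ U) :
    Tendsto (fun i => ∮ z in C(c, r), F i z) l (𝓝 (∮ z in C(c, r), f z)) :=
  ((tendstoLocallyUniformlyOn_iff_tendstoUniformlyOn_of_compact (isCompact_sphere c r)).mp
    (hF.mono hU)).tendsto_circleIntegral_of_continuousOn hr (hFc.mono fun _ h => h.mono hU)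

lemma continuousOn_logDeriv {f : ℂ → ℂ} {U : Set ℂ} (hf : DifferentiableOn ℂ f U)
    (hU : IsOpen U) (h0 : ∀ z ∈ U, f z ≠ 0) : ContinuousOn (logDeriv f) U :=
  (hf.deriv hU).continuousOn.div hf.continuousOn h0

lemma filter_Icc_two_dvd_eq {d N : ℕ} (hd : d ≠ 0) (hN : d ≤ N) :
    {n ∈ Icc 2 N | n ∣ d} = {n ∈ d.divisors | 2 ≤ n} := by
  ext n
  simp only [mem_filter, mem_Icc, Nat.mem_divisors]
  have := fun h : n ∣ d => Nat.le_of_dvd (Nat.pos_of_ne_zero hd) h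
  grind

lemma circleIntegral_logDeriv_div_pow_eq {α : ℕ → ℂ} {f : ℂ → ℂ} {R : ℝ} (hR1 : R ≤ 1)
    (hα : TendstoLocallyUniformlyOn (fun N z => ∏ n ∈ Icc 2 N, (1 - z ^ n) ^ α n) f atTop
      (ball 0 R))
    (hf : ∀ z ∈ ball (0 : ℂ) R, f z ≠ 0) {r : ℝ} (hr0 : 0 < r) (hrR : r < R) {d : ℕ}
    (hd : d ≠ 0) :
    ∮ z in C(0, r), logDeriv f z / z ^ d =
      -(2 * π * I) * ∑ n ∈ d.divisors with 2 ≤ n, n * α n := by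
  set U := ball (0 : ℂ) R \ {0}
  have hs : ∀ N, 0 ∉ Icc 2 N := fun N => by simp
  have hdiff : ∀ N, DifferentiableOn ℂ (fun z : ℂ => ∏ n ∈ Icc 2 N, (1 - z ^ n) ^ α n)
      (ball 0 R) :=
    fun N => (differentiableOn_prod_one_sub_pow_cpow α (hs N)).mono (ball_subset_ball hR1)
  have hprod_ne : ∀ N, ∀ z ∈ ball (0 : ℂ) R, ∏ n ∈ Icc 2 N, (1 - z ^ n) ^ α n ≠ 0 :=
    fun N z hz => prod_ne_zero_iff.mpr fun n hn => one_sub_pow_cpow_ne_zero (α n)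
      ((mem_ball_zero_iff.mp hz).trans_le hR1) (ne_of_mem_of_not_mem hn (hs N))
  have hfd : DifferentiableOn ℂ f (ball 0 R) := hα.differentiableOn (.of_forall hdiff) isOpen_ball
  have hpow : TendstoLocallyUniformlyOn (fun (_ : ℕ) (z : ℂ) => z ^ d) (· ^ d) atTop U :=
    fun u hu _ _ => ⟨U, self_mem_nhdsWithin, .of_forall fun _ _ _ => refl_mem_uniformity hu⟩
  have hsphere : sphere (0 : ℂ) r ⊆ U := fun z hz =>
    ⟨mem_ball_zero_iff.mpr ((mem_sphere_zero_iff_norm.mp hz).trans_lt hrR),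
      ne_zero_of_mem_sphere hr0.ne' ⟨z, hz⟩⟩
  have hlim := ((hα.logDeriv (.of_forall hdiff) isOpen_ball hf).mono Set.sdiff_subset).fun_div₀
    hpow ((continuousOn_logDeriv hfd isOpen_ball hf).mono Set.sdiff_subset)
    (continuous_pow d).continuousOn (fun z hz => pow_ne_zero d hz.2)
    |>.tendsto_circleIntegral (.of_forall fun N =>
      ((continuousOn_logDeriv (hdiff N) isOpen_ball (hprod_ne N)).mono Set.sdiff_subset).div
        (continuous_pow d).continuousOn fun z hz => pow_ne_zero d hz.2) hr0.le hsphere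
  refine tendsto_nhds_unique hlim (tendsto_const_nhds.congr' ?_)
  filter_upwards [eventually_ge_atTop d] with N hN
  rw [circleIntegral_logDeriv_prod_one_sub_pow_cpow_div_pow α (hs N) hr0 (hrR.trans_le hR1) hd,
    filter_Icc_two_dvd_eq hd hN]

lemma circleIntegral_div_pow_eq_of_le {g : ℂ → ℂ} {r R : ℝ}
    (hg : DifferentiableOn ℂ g (closedBall 0 R)) (hr : 0 < r) (hrR : r ≤ R) {d : ℕ}
    (hd : d ≠ 0) :
    ∮ z in C(0, R), g z / z ^ d = ∮ z in C(0, r), g z / z ^ d := by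
  obtain ⟨e, rfl⟩ := Nat.exists_eq_add_one_of_ne_zero hd
  have hsplit : ∀ z : ℂ, g z / z ^ (e + 1) = (z - 0)⁻¹ • (g z / z ^ e) := fun z => by
    rw [sub_zero, smul_eq_mul, pow_succ, ← div_div, div_eq_inv_mul]
  have hne : ∀ z ∈ closedBall (0 : ℂ) R \ ball 0 r, z ^ e ≠ 0 := fun z hz =>
    pow_ne_zero e (by rintro rfl; exact hz.2 (mem_ball_self hr))
  simp_rw [hsplit]
  refine circleIntegral_sub_center_inv_smul_eq_of_differentiable_on_annulus_off_countable hr hrR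
    Set.countable_empty ((hg.mono Set.sdiff_subset).continuousOn.div
      (continuous_pow e).continuousOn hne) fun z hz => ?_
  have hz0 : z ≠ 0 := by rintro rfl; exact hz.1.2 (mem_closedBall_self hr.le)
  exact (hg.differentiableAt (mem_of_superset (isOpen_ball.mem_nhds hz.1.1)
    ball_subset_closedBall)).div (differentiableAt_pow e) (pow_ne_zero e hz0)

lemma norm_le_mul_of_forall_norm_sum_divisors_le {E : Type*} [SeminormedAddCommGroup E]
    {a : ℕ → E} {n : ℕ} (hn : n ≠ 0) {C : ℝ}
    (h : ∀ d ∈ n.divisors, ‖∑ i ∈ d.divisors, a i‖ ≤ C) : ‖a n‖ ≤ n * C := by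
  have hC : 0 ≤ C := (norm_nonneg _).trans (h 1 (Nat.one_mem_divisors.mpr hn))
  rw [← ArithmeticFunction.sum_eq_iff_sum_smul_moebius_eq (f := a)
      (g := fun d => ∑ i ∈ d.divisors, a i) |>.mp (fun _ _ => rfl) n (Nat.pos_of_ne_zero hn),
    Nat.sum_divisorsAntidiagonal fun i j => ArithmeticFunction.moebius i • ∑ k ∈ j.divisors, a k]
  calc _ ≤ ∑ _i ∈ n.divisors, C := norm_sum_le_of_le _ fun i hi => by
        have hμ : ‖(ArithmeticFunction.moebius i : ℤ)‖ ≤ 1 := by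
          rw [Int.norm_eq_abs]; exact_mod_cast ArithmeticFunction.abs_moebius_le_one
        have hdiv : n / i ∈ n.divisors :=
          Nat.mem_divisors.mpr ⟨Nat.div_dvd_of_dvd (Nat.dvd_of_mem_divisors hi), hn⟩
        calc _ ≤ _ := norm_zsmul_le _ _
          _ ≤ 1 * C := mul_le_mul hμ (h _ hdiv) (norm_nonneg _) zero_le_one
          _ = C := one_mul C
    _ ≤ n * C := by
        rw [sum_const, nsmul_eq_mul]
        gcongr
        exact_mod_cast Nat.card_divisors_le_self n

lemma norm_sum_divisors_le_of_norm_logDeriv_le {α : ℕ → ℂ} {f : ℂ → ℂ} {R B : ℝ}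
    (hR0 : 0 < R) (hR1 : R ≤ 1)
    (hα : TendstoLocallyUniformlyOn (fun N z => ∏ n ∈ Icc 2 N, (1 - z ^ n) ^ α n) f atTop
      (ball 0 R))
    (hf : ∀ z ∈ ball (0 : ℂ) R, f z ≠ 0) (hg : DifferentiableOn ℂ (logDeriv f) (closedBall 0 R))
    (hB : ∀ z ∈ sphere (0 : ℂ) R, ‖logDeriv f z‖ ≤ B) {d : ℕ} (hd : d ≠ 0) :
    ‖∑ n ∈ d.divisors with 2 ≤ n, (n * α n : ℂ)‖ ≤ R * (B / R ^ d) := by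
  -- The products converge only inside the disc: compute the coefficient on `|z| = R / 2`,
  -- then move the contour out to `|z| = R`, where `hB` applies.
  have hI := circleIntegral_logDeriv_div_pow_eq hR1 hα hf (half_pos hR0) (half_lt_self hR0) hd
  rw [← circleIntegral_div_pow_eq_of_le hg (half_pos hR0) (half_le_self hR0.le) hd] at hI
  have hle := circleIntegral.norm_integral_le_of_norm_le_const
    (f := fun z => logDeriv f z / z ^ d) (c := 0) hR0.le fun z hz => by
      rw [norm_div, norm_pow, mem_sphere_zero_iff_norm.mp hz]
      exact div_le_div_of_nonneg_right (hB z hz) (by positivity)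
  have h2π : ‖-(2 * π * I)‖ = 2 * π := by simp [abs_of_pos pi_pos]
  rw [hI, norm_mul, h2π] at hle
  exact le_of_mul_le_mul_left (hle.trans_eq (mul_assoc _ _ _)) two_pi_pos

theorem stmt_19_general (R : ℝ) (hR0 : 0 < R) (hR1 : R ≤ 1)
    (U : Set ℂ) (hsub : Metric.closedBall (0 : ℂ) R ⊆ U)
    (f : ℂ → ℂ) (hf : AnalyticOnNhd ℂ f U) (hfne : ∀ z ∈ U, f z ≠ 0)
    (α : ℕ → ℂ)
    (hα : ∀ K ⊆ Metric.ball (0 : ℂ) R, IsCompact K →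
      TendstoUniformlyOn
        (fun N z => ∏ n ∈ Finset.Icc 2 N, (1 - z ^ n) ^ (α n)) f atTop K)
    (B : ℝ) (hB : 0 < B)
    (hbound : ∀ z : ℂ, ‖z‖ = R → ‖deriv f z / f z‖ ≤ B) :
    ∀ n : ℕ, n ≥ 2 → ‖α n‖ ≤ B / R ^ n := by
  intro n hn
  have hloc := (tendstoLocallyUniformlyOn_iff_forall_isCompact isOpen_ball).mpr hα
  have hlogDeriv : DifferentiableOn ℂ (logDeriv f) (closedBall 0 R) :=
    ((hf.deriv.div hf hfne).mono hsub).differentiableOn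
  have hdivisorSum : ∀ d ∈ n.divisors,
      ‖∑ i ∈ d.divisors, if 2 ≤ i then (i * α i : ℂ) else 0‖ ≤ R * (B / R ^ n) := fun d hd => by
    rw [← sum_filter]
    calc _ ≤ R * (B / R ^ d) := norm_sum_divisors_le_of_norm_logDeriv_le hR0 hR1 hloc
          (fun z hz => hfne z (hsub (ball_subset_closedBall hz))) hlogDeriv
          (fun z hz => hbound z (mem_sphere_zero_iff_norm.mp hz))
          (Nat.pos_of_mem_divisors hd).ne'
      _ ≤ R * (B / R ^ n) := mul_le_mul_of_nonneg_left (div_le_div_of_nonneg_left hB.le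
          (pow_pos hR0 n) (pow_le_pow_of_le_one hR0.le hR1 (Nat.divisor_le hd))) hR0.le
  have hmoebius := norm_le_mul_of_forall_norm_sum_divisors_le (by omega) hdivisorSum
  rw [if_pos hn, norm_mul, Complex.norm_natCast] at hmoebius
  calc ‖α n‖ ≤ R * (B / R ^ n) := le_of_mul_le_mul_left hmoebius (by positivity)
    _ ≤ B / R ^ n := mul_le_of_le_one_left (by positivity) hR1

theorem stmt_19 (R : ℝ) (hR0 : 0 < R) (hR1 : R ≤ 1)
    (U : Set ℂ) (hU : IsOpen U) (hsub : Metric.closedBall (0 : ℂ) R ⊆ U)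
    (f : ℂ → ℂ) (hf : AnalyticOnNhd ℂ f U) (hfne : ∀ z ∈ U, f z ≠ 0)
    (α : ℕ → ℂ)
    (hα : ∀ K ⊆ Metric.ball (0 : ℂ) R, IsCompact K →
      TendstoUniformlyOn
        (fun N z => ∏ n ∈ Finset.Icc 2 N, (1 - z ^ n) ^ (α n)) f atTop K)
    (B : ℝ) (hB : 0 < B)
    (hbound : ∀ z : ℂ, ‖z‖ = R → ‖deriv f z / f z‖ ≤ B) :
    ∀ n : ℕ, n ≥ 2 → ‖α n‖ ≤ B / R ^ n :=
  stmt_19_general R hR0 hR1 U hsub f hf hfne α hα B hB hbound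
end
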